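/- arXiv:1605.08880 — 3 statements merged into one kernel-verified Lean document; each statement's English description precedes it below -/
import Mathlib

section
/- The Wachter density f_W(λ; γ1, γ2) = (1/(2π γ1)) √((b₊ - λ)(λ - b₋)) / (λ(1-λ)) on [b₋, b₊], with b± = (√(γ1(1-γ2)) ± √(γ2(1-γ1)))², together with atoms of size max{0, 1 - γ2/γ1} at 0 and max{0, 1 - (1-γ2)/γ1} at 1, defines a probability measure; in particular the total mass equals 1. -/
/-!
With `s = √((b₊ - λ)(λ - b₋))`, partial fractions `1 / (λ (1 - λ)) = 1 / λ + 1 / (1 - λ)` reduce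
the density to two copies, exchanged by `λ ↦ 1 - λ`, of `s / λ`, which has an explicit `arcsin`
primitive and integrates over `[b₋, b₊]` to `π ((b₋ + b₊) / 2 - √(b₋ b₊))`.
Since `b₋ b₊ = (γ₁ - γ₂)²` and `(1 - b₋)(1 - b₊) = (1 - γ₁ - γ₂)²`, the continuous part has mass
`(1 - |γ₁ - γ₂| - |1 - γ₁ - γ₂|) / (2 γ₁)`, and writing `max 0 t = (t + |t|) / 2` the atoms
make up exactly the missing mass.
-/

open Real MeasureTheory Set

/-- With `s = √((b - x)(x - a))` and `m = (a + b) / 2`, split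
`s / x = (m - x) / s + m / s - a b / (x s)`: each term has an elementary primitive on `(a, b)`,
valid for `0 ≤ a`. -/
noncomputable def primitiveSqrtDiv (a b x : ℝ) : ℝ :=
  √((b - x) * (x - a)) + (a + b) / 2 * arcsin ((x - (a + b) / 2) / ((b - a) / 2))
    - √(a * b) * arcsin (((a + b) / 2 * x - a * b) / ((b - a) / 2 * x))

section Derivatives

variable {a b x : ℝ}

lemma hasDerivAt_sqrt_mul_sub (hx : x ∈ Ioo a b) :
    HasDerivAt (fun y => √((b - y) * (y - a)))
      (((a + b) / 2 - x) / √((b - x) * (x - a))) x := by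
  have hp : 0 < (b - x) * (x - a) := mul_pos (by linarith [hx.2]) (by linarith [hx.1])
  have hquad : HasDerivAt (fun y => (b - y) * (y - a)) (a + b - 2 * x) x := by
    refine (((hasDerivAt_id x).const_sub b).mul ((hasDerivAt_id x).sub_const a)).congr_deriv ?_
    simp only [id_eq]; ring
  convert hquad.sqrt hp.ne' using 1
  field_simp

lemma hasDerivAt_arcsin_affine (hx : x ∈ Ioo a b) :
    HasDerivAt (fun y => arcsin ((y - (a + b) / 2) / ((b - a) / 2)))
      (1 / √((b - x) * (x - a))) x := by
  obtain ⟨hxa, hxb⟩ := hx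
  have hr : 0 < (b - a) / 2 := by linarith
  have hba : b - a ≠ 0 := by linarith
  have hp : 0 < (b - x) * (x - a) := mul_pos (by linarith) (by linarith)
  have hone : 1 - ((x - (a + b) / 2) / ((b - a) / 2)) ^ 2
      = (b - x) * (x - a) / ((b - a) / 2) ^ 2 := by
    field_simp; ring
  have hlt : ((x - (a + b) / 2) / ((b - a) / 2)) ^ 2 < 1 := by
    have := div_pos hp (pow_pos hr 2); linarith
  have hinner : HasDerivAt (fun y => (y - (a + b) / 2) / ((b - a) / 2)) (1 / ((b - a) / 2)) x := by
    simpa using ((hasDerivAt_id x).sub_const ((a + b) / 2)).div_const ((b - a) / 2)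
  refine ((hasDerivAt_arcsin (by nlinarith) (by nlinarith)).comp x hinner).congr_deriv ?_
  rw [hone, sqrt_div hp.le, sqrt_sq hr.le]
  field_simp

lemma hasDerivAt_arcsin_moebius (ha : 0 < a) (hx : x ∈ Ioo a b) :
    HasDerivAt (fun y => arcsin (((a + b) / 2 * y - a * b) / ((b - a) / 2 * y)))
      (√(a * b) / (x * √((b - x) * (x - a)))) x := by
  obtain ⟨hxa, hxb⟩ := hx
  have hx0 : 0 < x := ha.trans hxa
  have hr : 0 < (b - a) / 2 := by linarith
  have hba : b - a ≠ 0 := by linarith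
  have hab : 0 < a * b := mul_pos ha (by linarith)
  have hp : 0 < (b - x) * (x - a) := mul_pos (by linarith) (by linarith)
  have hone : 1 - (((a + b) / 2 * x - a * b) / ((b - a) / 2 * x)) ^ 2
      = a * b * ((b - x) * (x - a)) / ((b - a) / 2 * x) ^ 2 := by
    field_simp; ring
  have hlt : (((a + b) / 2 * x - a * b) / ((b - a) / 2 * x)) ^ 2 < 1 := by
    have := div_pos (mul_pos hab hp) (pow_pos (mul_pos hr hx0) 2); linarith
  have hinner : HasDerivAt (fun y => ((a + b) / 2 * y - a * b) / ((b - a) / 2 * y))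
      (a * b / ((b - a) / 2 * x ^ 2)) x := by
    refine ((((hasDerivAt_id x).const_mul ((a + b) / 2)).sub_const (a * b)).div
      ((hasDerivAt_id x).const_mul ((b - a) / 2)) (by positivity)).congr_deriv ?_
    simp only [id_eq]; field_simp; ring
  refine ((hasDerivAt_arcsin (by nlinarith) (by nlinarith)).comp x hinner).congr_deriv ?_
  rw [hone, sqrt_div (by positivity), sqrt_sq (by positivity), sqrt_mul hab.le]
  have := sqrt_pos.2 hab
  field_simp
  rw [sq_sqrt hab.le]

end Derivatives

section Primitive

variable {a b x : ℝ}

lemma hasDerivAt_primitiveSqrtDiv (ha : 0 ≤ a) (hx : x ∈ Ioo a b) :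
    HasDerivAt (primitiveSqrtDiv a b) (√((b - x) * (x - a)) / x) x := by
  have hx0 : 0 < x := ha.trans_lt hx.1
  have hp : 0 < (b - x) * (x - a) := mul_pos (by linarith [hx.2]) (by linarith [hx.1])
  have hs : 0 < √((b - x) * (x - a)) := sqrt_pos.2 hp
  have hmoebius : HasDerivAt
      (fun y => √(a * b) * arcsin (((a + b) / 2 * y - a * b) / ((b - a) / 2 * y)))
      (a * b / (x * √((b - x) * (x - a)))) x := by
    rcases ha.eq_or_lt with rfl | ha
    · simpa using hasDerivAt_const x (0 : ℝ)
    · refine ((hasDerivAt_arcsin_moebius ha hx).const_mul _).congr_deriv ?_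
      rw [← mul_div_assoc, mul_self_sqrt (mul_pos ha (ha.trans (hx.1.trans hx.2))).le]
  refine (((hasDerivAt_sqrt_mul_sub hx).add
    ((hasDerivAt_arcsin_affine hx).const_mul ((a + b) / 2))).sub hmoebius).congr_deriv ?_
  field_simp
  rw [sq_sqrt hp.le]
  ring

lemma continuousOn_primitiveSqrtDiv (ha : 0 ≤ a) (hab : a < b) :
    ContinuousOn (primitiveSqrtDiv a b) (Icc a b) := by
  refine (Continuous.continuousOn (by fun_prop)).sub ?_
  rcases ha.eq_or_lt with rfl | ha
  · simpa using continuousOn_const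
  · refine continuousOn_const.mul (continuous_arcsin.comp_continuousOn ?_)
    refine ContinuousOn.div (by fun_prop) (by fun_prop) fun y hy => ?_
    have : 0 < y := ha.trans_le hy.1
    have : 0 < b - a := by linarith
    positivity

lemma primitiveSqrtDiv_sub (ha : 0 ≤ a) (hab : a < b) :
    primitiveSqrtDiv a b b - primitiveSqrtDiv a b a = π * ((a + b) / 2 - √(a * b)) := by
  have hba : b - a ≠ 0 := by linarith
  have hright : (b - (a + b) / 2) / ((b - a) / 2) = 1 := by field_simp; ring
  have hleft : (a - (a + b) / 2) / ((b - a) / 2) = -1 := by field_simp; ring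
  have hright' : ((a + b) / 2 * b - a * b) / ((b - a) / 2 * b) = 1 := by
    have : b ≠ 0 := by linarith
    field_simp; ring
  have hleft' : √(a * b) * arcsin (((a + b) / 2 * a - a * b) / ((b - a) / 2 * a))
      = √(a * b) * -(π / 2) := by
    rcases ha.eq_or_lt with rfl | ha
    · simp
    · congr 1
      rw [← arcsin_neg_one]
      congr 1
      field_simp; ring
  simp only [primitiveSqrtDiv, sub_self, zero_mul, mul_zero, sqrt_zero, hright, hleft, hright',
    hleft', arcsin_one, arcsin_neg_one]
  ring

end Primitive

/-- By `1 / (x (1 - x)) = 1 / x + 1 / (1 - x)`, the second summand is the first one reflected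
through `x ↦ 1 - x`. -/
noncomputable def wachterPrimitive (a b x : ℝ) : ℝ :=
  primitiveSqrtDiv a b x - primitiveSqrtDiv (1 - b) (1 - a) (1 - x)

section WachterPrimitive

variable {a b x : ℝ}

lemma hasDerivAt_wachterPrimitive (ha : 0 ≤ a) (hb : b ≤ 1) (hx : x ∈ Ioo a b) :
    HasDerivAt (wachterPrimitive a b) (√((b - x) * (x - a)) / (x * (1 - x))) x := by
  have hx0 : x ≠ 0 := (ha.trans_lt hx.1).ne'
  have hx1 : 1 - x ≠ 0 := by linarith [hx.2]
  have hreflect : HasDerivAt (fun y => primitiveSqrtDiv (1 - b) (1 - a) (1 - y))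
      (-(√((b - x) * (x - a)) / (1 - x))) x := by
    have h := (hasDerivAt_primitiveSqrtDiv (a := 1 - b) (b := 1 - a) (x := 1 - x)
      (by linarith) ⟨by linarith [hx.2], by linarith [hx.1]⟩).comp x
      ((hasDerivAt_id x).const_sub 1)
    refine h.congr_deriv ?_
    rw [show (1 - a - (1 - x)) * (1 - x - (1 - b)) = (b - x) * (x - a) by ring]
    ring
  refine ((hasDerivAt_primitiveSqrtDiv ha hx).sub hreflect).congr_deriv ?_
  field_simp
  ring

lemma continuousOn_wachterPrimitive (ha : 0 ≤ a) (hab : a < b) (hb : b ≤ 1) :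
    ContinuousOn (wachterPrimitive a b) (Icc a b) :=
  (continuousOn_primitiveSqrtDiv ha hab).sub <|
    (continuousOn_primitiveSqrtDiv (by linarith) (by linarith)).comp
      (continuous_const.sub continuous_id).continuousOn
      fun y hy => ⟨by linarith [hy.2], by linarith [hy.1]⟩

lemma wachterPrimitive_sub (ha : 0 ≤ a) (hab : a < b) (hb : b ≤ 1) :
    wachterPrimitive a b b - wachterPrimitive a b a
      = π * (1 - √(a * b) - √((1 - a) * (1 - b))) := by
  have h₁ := primitiveSqrtDiv_sub ha hab
  have h₂ := primitiveSqrtDiv_sub (a := 1 - b) (b := 1 - a) (by linarith) (by linarith)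
  rw [mul_comm (1 - b)] at h₂
  simp only [wachterPrimitive]
  linear_combination h₁ + h₂

lemma sqrt_div_mul_one_sub_nonneg (ha : 0 ≤ a) (hb : b ≤ 1) (hx : x ∈ Icc a b) :
    0 ≤ √((b - x) * (x - a)) / (x * (1 - x)) :=
  div_nonneg (sqrt_nonneg _) (mul_nonneg (by linarith [hx.1]) (by linarith [hx.2]))

lemma integrableOn_sqrt_div_mul_one_sub (ha : 0 ≤ a) (hab : a < b) (hb : b ≤ 1) :
    IntegrableOn (fun x => √((b - x) * (x - a)) / (x * (1 - x))) (Icc a b) := by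
  rw [integrableOn_Icc_iff_integrableOn_Ioc]
  exact intervalIntegral.integrableOn_deriv_of_nonneg (continuousOn_wachterPrimitive ha hab hb)
    (fun x hx => hasDerivAt_wachterPrimitive ha hb hx)
    (fun x hx => sqrt_div_mul_one_sub_nonneg ha hb (Ioo_subset_Icc_self hx))

lemma integral_sqrt_div_mul_one_sub (ha : 0 ≤ a) (hab : a < b) (hb : b ≤ 1) :
    ∫ x in Icc a b, √((b - x) * (x - a)) / (x * (1 - x))
      = π * (1 - √(a * b) - √((1 - a) * (1 - b))) := by
  rw [integral_Icc_eq_integral_Ioc, ← intervalIntegral.integral_of_le hab.le,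
    intervalIntegral.integral_eq_sub_of_hasDerivAt_of_le hab.le
      (continuousOn_wachterPrimitive ha hab hb) (fun x hx => hasDerivAt_wachterPrimitive ha hb hx)
      ((intervalIntegrable_iff_integrableOn_Icc_of_le hab.le).2
        (integrableOn_sqrt_div_mul_one_sub ha hab hb)),
    wachterPrimitive_sub ha hab hb]

end WachterPrimitive

lemma lintegral_ofReal_indicator {α : Type*} [MeasurableSpace α] {μ : Measure α} {s : Set α}
    {f : α → ℝ} (hs : MeasurableSet s) (hf : IntegrableOn f s μ) (hnn : ∀ x ∈ s, 0 ≤ f x) :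
    ∫⁻ x, ENNReal.ofReal (s.indicator f x) ∂μ = ENNReal.ofReal (∫ x in s, f x ∂μ) := by
  rw [ofReal_integral_eq_lintegral_ofReal hf ((ae_restrict_iff' hs).2 (ae_of_all _ hnn)),
    ← lintegral_indicator hs]
  congr 1 with x
  by_cases hx : x ∈ s <;> simp [hx]

section Edges

variable {γ₁ γ₂ : ℝ}

lemma wachter_edge_mul (hp : 0 ≤ γ₁ * (1 - γ₂)) (hq : 0 ≤ γ₂ * (1 - γ₁)) :
    (√(γ₁ * (1 - γ₂)) - √(γ₂ * (1 - γ₁))) ^ 2 * (√(γ₁ * (1 - γ₂)) + √(γ₂ * (1 - γ₁))) ^ 2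
      = (γ₁ - γ₂) ^ 2 := by
  set u := √(γ₁ * (1 - γ₂))
  set v := √(γ₂ * (1 - γ₁))
  linear_combination (u ^ 2 - v ^ 2 + γ₁ - γ₂) * (sq_sqrt hp - sq_sqrt hq)

lemma wachter_one_sub_edge_mul (hp : 0 ≤ γ₁ * (1 - γ₂)) (hq : 0 ≤ γ₂ * (1 - γ₁)) :
    (1 - (√(γ₁ * (1 - γ₂)) - √(γ₂ * (1 - γ₁))) ^ 2)
      * (1 - (√(γ₁ * (1 - γ₂)) + √(γ₂ * (1 - γ₁))) ^ 2) = (1 - γ₁ - γ₂) ^ 2 := by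
  set u := √(γ₁ * (1 - γ₂))
  set v := √(γ₂ * (1 - γ₁))
  linear_combination (u ^ 2 - v ^ 2 + γ₁ - γ₂ - 2) * sq_sqrt hp
    - (u ^ 2 - v ^ 2 + γ₁ - γ₂ + 2) * sq_sqrt hq

lemma wachter_edge_lt (hp : 0 < γ₁ * (1 - γ₂)) (hq : 0 < γ₂ * (1 - γ₁)) :
    (√(γ₁ * (1 - γ₂)) - √(γ₂ * (1 - γ₁))) ^ 2 < (√(γ₁ * (1 - γ₂)) + √(γ₂ * (1 - γ₁))) ^ 2 := by
  nlinarith [mul_pos (sqrt_pos.2 hp) (sqrt_pos.2 hq)]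

/-- The edges sum to `2 (γ₁ (1 - γ₂) + γ₂ (1 - γ₁)) ≤ 2` and `(1 - b₋) (1 - b₊) ≥ 0`,
so they cannot both exceed `1`. -/
lemma wachter_edge_le_one (hγ₁ : γ₁ ∈ Icc 0 1) (hγ₂ : γ₂ ∈ Icc 0 1) :
    (√(γ₁ * (1 - γ₂)) + √(γ₂ * (1 - γ₁))) ^ 2 ≤ 1 := by
  obtain ⟨h₁0, h₁1⟩ := hγ₁
  obtain ⟨h₂0, h₂1⟩ := hγ₂
  have hp : 0 ≤ γ₁ * (1 - γ₂) := mul_nonneg h₁0 (by linarith)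
  have hq : 0 ≤ γ₂ * (1 - γ₁) := mul_nonneg h₂0 (by linarith)
  have hprod := wachter_one_sub_edge_mul hp hq
  nlinarith [sq_sqrt hp, sq_sqrt hq, sq_nonneg (1 - γ₁ - γ₂), mul_nonneg h₁0 h₂0,
    mul_nonneg (sub_nonneg.2 h₁1) (sub_nonneg.2 h₂1),
    sq_nonneg (√(γ₁ * (1 - γ₂)) - √(γ₂ * (1 - γ₁)))]

end Edges

lemma max_zero_eq_half_add_abs (t : ℝ) : max 0 t = (t + |t|) / 2 := by
  rcases le_total 0 t with h | h
  · rw [max_eq_right h, abs_of_nonneg h]; ring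
  · rw [max_eq_left h, abs_of_nonpos h]; ring

lemma wachter_total_mass {γ₁ γ₂ : ℝ} (hγ₁ : γ₁ ∈ Ioo 0 1) (hγ₂ : γ₂ ∈ Ioo 0 1) :
    ENNReal.ofReal ((1 - |γ₁ - γ₂| - |1 - γ₁ - γ₂|) / (2 * γ₁))
      + ENNReal.ofReal (max 0 (1 - γ₂ / γ₁)) + ENNReal.ofReal (max 0 (1 - (1 - γ₂) / γ₁)) = 1 := by
  obtain ⟨h₁0, h₁1⟩ := hγ₁
  obtain ⟨h₂0, h₂1⟩ := hγ₂
  have habs : |γ₁ - γ₂| + |1 - γ₁ - γ₂| ≤ 1 := by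
    rcases abs_cases (γ₁ - γ₂) with ⟨e₁, _⟩ | ⟨e₁, _⟩ <;>
      rcases abs_cases (1 - γ₁ - γ₂) with ⟨e₂, _⟩ | ⟨e₂, _⟩ <;> linarith
  have hdensity : 0 ≤ (1 - |γ₁ - γ₂| - |1 - γ₁ - γ₂|) / (2 * γ₁) := by
    apply div_nonneg <;> linarith
  rw [← ENNReal.ofReal_add hdensity (le_max_left _ _),
    ← ENNReal.ofReal_add (by positivity) (le_max_left _ _), ← ENNReal.ofReal_one]
  congr 1
  rw [max_zero_eq_half_add_abs, max_zero_eq_half_add_abs, show 1 - γ₂ / γ₁ = (γ₁ - γ₂) / γ₁ by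
    field_simp, show 1 - (1 - γ₂) / γ₁ = -(1 - γ₁ - γ₂) / γ₁ by field_simp; ring,
    abs_div, abs_div, abs_neg, abs_of_pos h₁0]
  field_simp
  ring

/-- The Wachter density on `[b₋, b₊]` together with the atoms at `0`
and `1` defines a probability measure: the total mass equals one. -/
theorem stmt6 (γ₁ γ₂ : ℝ) (hγ₁ : γ₁ ∈ Set.Ioo (0 : ℝ) 1) (hγ₂ : γ₂ ∈ Set.Ioo (0 : ℝ) 1)
    (bm bp : ℝ)
    (hbm : bm = (Real.sqrt (γ₁ * (1 - γ₂)) - Real.sqrt (γ₂ * (1 - γ₁))) ^ 2)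
    (hbp : bp = (Real.sqrt (γ₁ * (1 - γ₂)) + Real.sqrt (γ₂ * (1 - γ₁))) ^ 2)
    (fW : ℝ → ℝ)
    (hfW : ∀ l, fW l =
      (1 / (2 * Real.pi * γ₁)) * Real.sqrt ((bp - l) * (l - bm)) / (l * (1 - l)))
    (μ : Measure ℝ)
    (hμ : μ = (volume.withDensity fun l =>
          ENNReal.ofReal (Set.indicator (Set.Icc bm bp) fW l))
        + ENNReal.ofReal (max 0 (1 - γ₂ / γ₁)) • Measure.dirac (0 : ℝ)
        + ENNReal.ofReal (max 0 (1 - (1 - γ₂) / γ₁)) • Measure.dirac (1 : ℝ)) :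
    IsProbabilityMeasure μ := by
  have hp : 0 < γ₁ * (1 - γ₂) := mul_pos hγ₁.1 (sub_pos.2 hγ₂.2)
  have hq : 0 < γ₂ * (1 - γ₁) := mul_pos hγ₂.1 (sub_pos.2 hγ₁.2)
  have hbm0 : 0 ≤ bm := hbm ▸ sq_nonneg _
  have hlt : bm < bp := hbm ▸ hbp ▸ wachter_edge_lt hp hq
  have hbp1 : bp ≤ 1 :=
    hbp ▸ wachter_edge_le_one (Ioo_subset_Icc_self hγ₁) (Ioo_subset_Icc_self hγ₂)
  have hfW' : fW = fun l => 1 / (2 * π * γ₁) * (√((bp - l) * (l - bm)) / (l * (1 - l))) :=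
    funext fun l => (hfW l).trans (mul_div_assoc _ _ _)
  have hdensity : ∫⁻ l, ENNReal.ofReal ((Icc bm bp).indicator fW l)
      = ENNReal.ofReal ((1 - |γ₁ - γ₂| - |1 - γ₁ - γ₂|) / (2 * γ₁)) := by
    have hC : 0 ≤ 1 / (2 * π * γ₁) := by have := hγ₁.1; positivity
    rw [lintegral_ofReal_indicator measurableSet_Icc
        (hfW' ▸ (integrableOn_sqrt_div_mul_one_sub hbm0 hlt hbp1).const_mul _)
        (hfW' ▸ fun x hx => mul_nonneg hC (sqrt_div_mul_one_sub_nonneg hbm0 hbp1 hx)),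
      hfW', integral_const_mul, integral_sqrt_div_mul_one_sub hbm0 hlt hbp1, hbm, hbp,
      wachter_edge_mul hp.le hq.le, wachter_one_sub_edge_mul hp.le hq.le, sqrt_sq_eq_abs,
      sqrt_sq_eq_abs]
    congr 1
    field_simp
  refine ⟨?_⟩
  simp only [hμ, Measure.add_apply, Measure.smul_apply, measure_univ, smul_eq_mul, mul_one,
    withDensity_apply _ MeasurableSet.univ, Measure.restrict_univ, hdensity]
  exact wachter_total_mass hγ₁ hγ₂
end

section
/- The function g(c) = (1+c)/(2c²) · ln(1+c) - (1-c)/(2c²) · ln(1-c) + (1-2c)/(2c²) · ln(1-2c), defined for c ∈ (0, 1/2), satisfies g(c) > 1 for all c ∈ (0, 1/2), and lim_{c→0+} g(c) = 1. -/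
open Real Filter Set Topology

/-! Write `g c = F c / (2 c²)` with `F = numerator`. Then `F 0 = F' 0 = 0`, and
`F'' c - 4 = 2c(3 + 2c - 4c²) / ((1 + c)(1 - c)(1 - 2c))` is positive on `(0, 1/2)`, so comparing
derivatives twice from `0` gives `F' c > 4c` and then `F c > 2c²`. For the limit, `F' c / (4c)`
is a difference quotient of `F'` at `0`, tending to `F'' 0 / 4 = 1`, and one application of
l'Hôpital's rule passes this to `F c / (2c²)`. -/

noncomputable def numerator (c : ℝ) : ℝ :=
  (1 + c) * log (1 + c) - (1 - c) * log (1 - c) + (1 - 2 * c) * log (1 - 2 * c)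

noncomputable def numeratorDeriv (c : ℝ) : ℝ :=
  log (1 + c) + log (1 - c) - 2 * log (1 - 2 * c)

noncomputable def numeratorDeriv2 (c : ℝ) : ℝ :=
  1 / (1 + c) - 1 / (1 - c) + 4 / (1 - 2 * c)

theorem lt_of_hasDerivAt_lt_of_eq {f g f' g' : ℝ → ℝ} {a b x : ℝ}
    (hf : ∀ y ∈ Ico a b, HasDerivAt f (f' y) y) (hg : ∀ y ∈ Ico a b, HasDerivAt g (g' y) y)
    (ha : f a = g a) (hlt : ∀ y ∈ Ioo a b, f' y < g' y) (hx : x ∈ Ioo a b) : f x < g x := by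
  have hmono : StrictMonoOn (fun y => g y - f y) (Ico a b) := by
    refine strictMonoOn_of_deriv_pos (convex_Ico a b)
      (fun y hy => ((hg y hy).sub (hf y hy)).continuousAt.continuousWithinAt) fun y hy => ?_
    rw [interior_Ico] at hy
    have hd : HasDerivAt (fun y => g y - f y) (g' y - f' y) y :=
      (hg y (Ioo_subset_Ico_self hy)).sub (hf y (Ioo_subset_Ico_self hy))
    rw [hd.deriv]
    linarith [hlt y hy]
  have := hmono (left_mem_Ico.2 (hx.1.trans hx.2)) (Ioo_subset_Ico_self hx) hx.1
  linarith

theorem hasDerivAt_two_mul_sq (x : ℝ) : HasDerivAt (fun y : ℝ => 2 * y ^ 2) (4 * x) x :=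
  ((hasDerivAt_pow 2 x).const_mul 2).congr_deriv (by push_cast; ring)

theorem hasDerivAt_mul_log_comp {u : ℝ → ℝ} {u' x : ℝ} (hu : HasDerivAt u u' x)
    (hx : u x ≠ 0) :
    HasDerivAt (fun y => u y * log (u y)) ((log (u x) + 1) * u') x :=
  (hasDerivAt_mul_log hx).comp x hu

theorem hasDerivAt_numerator {c : ℝ} (h₁ : -1 < c) (h₂ : c < 1 / 2) :
    HasDerivAt numerator (numeratorDeriv c) c := by
  have hp := hasDerivAt_mul_log_comp ((hasDerivAt_id c).const_add 1) (by simp; linarith)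
  have hm := hasDerivAt_mul_log_comp ((hasDerivAt_id c).const_sub 1) (by simp; linarith)
  have hm2 := hasDerivAt_mul_log_comp (((hasDerivAt_id c).const_mul 2).const_sub 1)
    (by simp; linarith)
  exact ((hp.sub hm).add hm2).congr_deriv (by simp only [numeratorDeriv, id]; ring)

theorem hasDerivAt_numeratorDeriv {c : ℝ} (h₁ : -1 < c) (h₂ : c < 1 / 2) :
    HasDerivAt numeratorDeriv (numeratorDeriv2 c) c := by
  have hp := ((hasDerivAt_id c).const_add 1).log (by simp; linarith)
  have hm := ((hasDerivAt_id c).const_sub 1).log (by simp; linarith)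
  have hm2 := (((hasDerivAt_id c).const_mul 2).const_sub 1).log (by simp; linarith)
  exact ((hp.add hm).sub (hm2.const_mul 2)).congr_deriv (by simp only [numeratorDeriv2, id]; ring)

theorem numeratorDeriv2_sub_four {c : ℝ} (h₁ : 1 + c ≠ 0) (h₂ : 1 - c ≠ 0)
    (h₃ : 1 - 2 * c ≠ 0) :
    numeratorDeriv2 c - 4 =
      2 * c * (3 + 2 * c - 4 * c ^ 2) / ((1 + c) * (1 - c) * (1 - 2 * c)) := by
  rw [numeratorDeriv2, div_sub_div _ _ h₁ h₂, div_add_div _ _ (mul_ne_zero h₁ h₂) h₃,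
    sub_eq_iff_eq_add, div_add' _ _ _ (by simp [*])]
  congr 1
  ring

theorem four_lt_numeratorDeriv2 {c : ℝ} (h₁ : 0 < c) (h₂ : c < 1 / 2) :
    4 < numeratorDeriv2 c := by
  have hc₁ : 0 < 1 - c := by linarith
  have hc₂ : 0 < 1 - 2 * c := by linarith
  have hquad : 0 < 3 + 2 * c - 4 * c ^ 2 := by nlinarith
  have hpos : 0 < numeratorDeriv2 c - 4 := by
    rw [numeratorDeriv2_sub_four (by linarith) hc₁.ne' hc₂.ne']
    positivity
  linarith

theorem four_mul_lt_numeratorDeriv {c : ℝ} (h₁ : 0 < c) (h₂ : c < 1 / 2) :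
    4 * c < numeratorDeriv c :=
  lt_of_hasDerivAt_lt_of_eq (f' := fun _ => 4)
    (fun y _ => by simpa using (hasDerivAt_id y).const_mul 4)
    (fun y hy => hasDerivAt_numeratorDeriv (by linarith [hy.1]) hy.2)
    (by simp [numeratorDeriv]) (fun _ hy => four_lt_numeratorDeriv2 hy.1 hy.2) ⟨h₁, h₂⟩

theorem two_mul_sq_lt_numerator {c : ℝ} (h₁ : 0 < c) (h₂ : c < 1 / 2) :
    2 * c ^ 2 < numerator c :=
  lt_of_hasDerivAt_lt_of_eq (fun y _ => hasDerivAt_two_mul_sq y)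
    (fun y hy => hasDerivAt_numerator (by linarith [hy.1]) hy.2)
    (by simp [numerator]) (fun _ hy => four_mul_lt_numeratorDeriv hy.1 hy.2) ⟨h₁, h₂⟩

theorem tendsto_numeratorDeriv_div :
    Tendsto (fun c => numeratorDeriv c / (4 * c)) (𝓝[>] 0) (𝓝 1) := by
  have hslope := (hasDerivAt_numeratorDeriv (c := 0) (by norm_num) (by norm_num)).tendsto_slope
  rw [show numeratorDeriv2 0 = 4 by norm_num [numeratorDeriv2]] at hslope
  have := (hslope.div_const 4).mono_left (nhdsGT_le_nhdsNE 0)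
  rw [div_self four_ne_zero] at this
  refine this.congr fun c => ?_
  simp [slope_def_field, numeratorDeriv, div_div, mul_comm]

theorem tendsto_numerator_div :
    Tendsto (fun c => numerator c / (2 * c ^ 2)) (𝓝[>] 0) (𝓝 1) := by
  refine HasDerivAt.lhopital_zero_right_on_Ioo (b := 1 / 2) (f' := numeratorDeriv)
    (by norm_num) (fun c hc => hasDerivAt_numerator (by linarith [hc.1]) hc.2)
    (fun c _ => hasDerivAt_two_mul_sq c) (fun c hc => by linarith [hc.1]) ?_ ?_
    tendsto_numeratorDeriv_div
  · have h := (hasDerivAt_numerator (c := 0) (by norm_num) (by norm_num)).continuousAt.tendsto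
    rw [show numerator 0 = 0 by simp [numerator]] at h
    exact h.mono_left nhdsWithin_le_nhds
  · have h := (hasDerivAt_two_mul_sq 0).continuousAt.tendsto
    rw [show (2 : ℝ) * 0 ^ 2 = 0 by norm_num] at h
    exact h.mono_left nhdsWithin_le_nhds

/-- `g(c) = [(1+c)ln(1+c) - (1-c)ln(1-c) + (1-2c)ln(1-2c)]/(2c²)`
satisfies `g(c) > 1` on `(0,1/2)` and `g(c) → 1` as `c → 0⁺`. -/
theorem stmt11 (g : ℝ → ℝ)
    (hg : ∀ c, g c = ((1 + c) * Real.log (1 + c) - (1 - c) * Real.log (1 - c)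
        + (1 - 2 * c) * Real.log (1 - 2 * c)) / (2 * c ^ 2)) :
    (∀ c ∈ Set.Ioo (0 : ℝ) (1/2), 1 < g c) ∧
    Filter.Tendsto g (nhdsWithin 0 (Set.Ioi 0)) (nhds 1) := by
  have hg' : g = fun c => numerator c / (2 * c ^ 2) := funext hg
  subst hg'
  refine ⟨fun c hc => ?_, tendsto_numerator_div⟩
  rw [one_lt_div (by have := hc.1; positivity)]
  exact two_mul_sq_lt_numerator hc.1 hc.2
end

section
/- As γ → 0+, the rescaled Wachter distribution F_γ(λ) := W(γλ; γ/(1+γ), 2γ/(1+γ)) converges weakly to the distribution F₀ supported on [(1-√2)², (1+√2)²] with density f(λ) = (1/(2π)) √((a₊-λ)(λ-a₋))/λ where a± = (1±√2)². -/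
open Real Filter
open MeasureTheory Set Topology Function
open scoped Interval

/-!
The integral `∫_{b̂₋(γ)}^{b̂₊(γ)} g f_γ` is in fact continuous in `γ` at `γ = 0`, where it is the
limit integral. The edges `b̂±` are continuous at `0` with `b̂±(0) = (1 ± √2)²`, and the integrand
`(γ, λ) ↦ g λ * f_γ λ` is jointly continuous at every `(0, λ)` with `λ ≠ 0`. By compactness it is
therefore uniformly bounded for `γ` near `0` and `λ` in a closed interval around `[a₋, a₊]` that
avoids `0`, so dominated convergence makes the primitive `(γ, s) ↦ ∫_{a₋}^{s} g f_γ` jointly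
continuous, and the integral between the moving edges is a difference of two such primitives.
-/

theorem IsCompact.exists_eventually_forall_norm_le {X Y E : Type*} [TopologicalSpace X]
    [TopologicalSpace Y] [SeminormedAddCommGroup E] {F : X → Y → E} {x₀ : X} {K : Set Y}
    (hK : IsCompact K) (hF : ∀ y ∈ K, ContinuousAt (uncurry F) (x₀, y)) :
    ∃ C, ∀ᶠ x in 𝓝 x₀, ∀ y ∈ K, ‖F x y‖ ≤ C := by
  obtain ⟨M, hM⟩ := hK.exists_bound_of_continuousOn fun y hy =>
    ((hF y hy).comp (Continuous.prodMk_right x₀).continuousAt).continuousWithinAt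
  refine ⟨M + 1, hK.eventually_forall_of_forall_eventually fun y hy => ?_⟩
  exact ((hF y hy).norm.eventually (gt_mem_nhds ((hM y hy).trans_lt (lt_add_one M)))).mono
    fun _ hz => hz.le

namespace intervalIntegral

theorem continuousAt_parametric_intervalIntegral_of_continuousAt {X E : Type*}
    [TopologicalSpace X] [FirstCountableTopology X] [NormedAddCommGroup E] [NormedSpace ℝ E]
    {μ : Measure ℝ} [NullSingletonClass μ] [IsLocallyFiniteMeasure μ]
    {F : X → ℝ → E} {a b : X → ℝ} {x₀ : X} {c d : ℝ}
    (hF_meas : ∀ x, AEStronglyMeasurable (F x) (μ.restrict (Ι c d)))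
    (hF_cont : ∀ t ∈ Icc c d, ContinuousAt (uncurry F) (x₀, t))
    (ha : ContinuousAt a x₀) (hb : ContinuousAt b x₀)
    (ha₀ : a x₀ ∈ Ioo c d) (hb₀ : b x₀ ∈ Ioo c d) :
    ContinuousAt (fun x => ∫ t in a x..b x, F x t ∂μ) x₀ := by
  have hcd : c ≤ d := ha₀.1.le.trans ha₀.2.le
  have mem_Icc : ∀ t ∈ Ι c d, t ∈ Icc c d := fun t ht => by
    rw [uIoc_of_le hcd] at ht
    exact Ioc_subset_Icc_self ht
  obtain ⟨C, hC⟩ := isCompact_Icc.exists_eventually_forall_norm_le hF_cont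
  have h_bound : ∀ᶠ x in 𝓝 x₀, ∀ᵐ t ∂μ.restrict (Ι c d), ‖F x t‖ ≤ C :=
    hC.mono fun x hx => ae_restrict_of_forall_mem measurableSet_uIoc fun t ht => hx t (mem_Icc t ht)
  have h_cont : ∀ᵐ t ∂μ.restrict (Ι c d), ContinuousAt (fun x => F x t) x₀ :=
    ae_restrict_of_forall_mem measurableSet_uIoc fun t ht =>
      (hF_cont t (mem_Icc t ht)).comp₂ continuousAt_id continuousAt_const
  have h_primitive : ∀ s ∈ Ioo c d,
      ContinuousAt (fun p : X × ℝ => ∫ t in a x₀..p.2, F p.1 t ∂μ) (x₀, s) := fun s hs =>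
    continuousAt_parametric_primitive_of_dominated _ c d hF_meas h_bound
      intervalIntegrable_const h_cont ha₀ hs (measure_singleton s)
  have h_sub : (fun x => ∫ t in a x..b x, F x t ∂μ) =ᶠ[𝓝 x₀]
      fun x => (∫ t in a x₀..b x, F x t ∂μ) - ∫ t in a x₀..a x, F x t ∂μ := by
    filter_upwards [h_bound, ha.eventually (Ioo_mem_nhds ha₀.1 ha₀.2),
      hb.eventually (Ioo_mem_nhds hb₀.1 hb₀.2)] with x hx hax hbx
    have hint : IntervalIntegrable (F x) μ c d :=
      intervalIntegrable_const.mono_fun' (hF_meas x) hx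
    have huIcc : ∀ s ∈ Ioo c d, [[a x₀, s]] ⊆ [[c, d]] := fun s hs =>
      uIcc_subset_uIcc (Ioo_subset_Icc_self.trans Icc_subset_uIcc ha₀)
        (Ioo_subset_Icc_self.trans Icc_subset_uIcc hs)
    exact (integral_interval_sub_left (hint.mono_set (huIcc _ hbx))
      (hint.mono_set (huIcc _ hax))).symm
  rw [continuousAt_congr h_sub]
  exact ((h_primitive _ hb₀).comp₂ continuousAt_id hb).sub
    ((h_primitive _ ha₀).comp₂ continuousAt_id ha)

end intervalIntegral

noncomputable section

def wachterLowerEdge (γ : ℝ) : ℝ := (√2 + √(1 - γ)) ^ (-2 : ℤ)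

def wachterUpperEdge (γ : ℝ) : ℝ := (√2 - √(1 - γ)) ^ (-2 : ℤ)

def wachterDensity (γ t : ℝ) : ℝ :=
  ((1 + γ) / (2 * π)) * √((wachterUpperEdge γ - t) * (t - wachterLowerEdge γ)) / (t * (1 - γ * t))

end

theorem wachterLowerEdge_zero : wachterLowerEdge 0 = (1 - √2) ^ 2 := by
  have h2 : √2 ^ 2 = 2 := sq_sqrt zero_le_two
  have hne : √2 + 1 ≠ 0 := by positivity
  rw [wachterLowerEdge, sub_zero, sqrt_one, zpow_neg, zpow_two, ← sq]
  field_simp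
  nlinarith

theorem wachterUpperEdge_zero : wachterUpperEdge 0 = (1 + √2) ^ 2 := by
  have h2 : √2 ^ 2 = 2 := sq_sqrt zero_le_two
  have hne : √2 - 1 ≠ 0 := by nlinarith
  rw [wachterUpperEdge, sub_zero, sqrt_one, zpow_neg, zpow_two, ← sq]
  field_simp
  nlinarith

theorem continuous_wachterLowerEdge : Continuous wachterLowerEdge :=
  (by fun_prop : Continuous fun γ : ℝ => √2 + √(1 - γ)).zpow₀ _ fun γ =>
    Or.inl (by positivity)

theorem continuousAt_wachterUpperEdge : ContinuousAt wachterUpperEdge 0 := by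
  have : √2 - √(1 - 0) ≠ 0 := by
    rw [sub_zero, sqrt_one, sub_ne_zero]
    exact one_lt_sqrt_two.ne'
  exact ((by fun_prop : Continuous fun γ : ℝ => √2 - √(1 - γ)).continuousAt).zpow₀ _ (Or.inl this)

theorem continuousAt_wachterDensity {t : ℝ} (ht : t ≠ 0) :
    ContinuousAt (uncurry wachterDensity) (0, t) := by
  have hU := continuousAt_wachterUpperEdge.comp (x := ((0 : ℝ), t)) continuousAt_fst
  have hL := continuous_wachterLowerEdge.continuousAt.comp (x := ((0 : ℝ), t)) continuousAt_fst
  refine ContinuousAt.div ?_ (by fun_prop) (by simpa using ht)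
  exact (by fun_prop : ContinuousAt (fun p : ℝ × ℝ => (1 + p.1) / (2 * π)) _).mul
    (((hU.sub continuousAt_snd).mul (continuousAt_snd.sub hL)).sqrt)

theorem measurable_wachterDensity (γ : ℝ) : Measurable (wachterDensity γ) := by
  unfold wachterDensity
  fun_prop

/-- As `γ → 0⁺`, the rescaled Wachter distribution `F_γ`, with
density `f_γ(λ) = ((1+γ)/(2π)) √((b̂₊-λ)(λ-b̂₋))/(λ(1-γλ))` on
`[b̂₋, b̂₊]` where `b̂± = (√2 ∓ √(1-γ))⁻²`, converges weakly to the
distribution with density `f(λ) = (1/(2π)) √((a₊-λ)(λ-a₋))/λ` on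
`[a₋, a₊]`, `a± = (1 ± √2)²`: integrals of every bounded continuous
function converge. -/
theorem stmt13
    (bm bp : ℝ → ℝ)
    (hbm : ∀ γ, bm γ = (Real.sqrt 2 + Real.sqrt (1 - γ)) ^ (-2 : ℤ))
    (hbp : ∀ γ, bp γ = (Real.sqrt 2 - Real.sqrt (1 - γ)) ^ (-2 : ℤ))
    (fγ : ℝ → ℝ → ℝ)
    (hfγ : ∀ γ l, fγ γ l =
      ((1 + γ) / (2 * Real.pi)) * Real.sqrt ((bp γ - l) * (l - bm γ))
        / (l * (1 - γ * l)))
    (am ap : ℝ)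
    (ham : am = (1 - Real.sqrt 2) ^ 2) (hap : ap = (1 + Real.sqrt 2) ^ 2)
    (f : ℝ → ℝ)
    (hf : ∀ l, f l = (1 / (2 * Real.pi)) * Real.sqrt ((ap - l) * (l - am)) / l) :
    ∀ g : BoundedContinuousFunction ℝ ℝ,
      Filter.Tendsto (fun γ => ∫ l in (bm γ)..(bp γ), g l * fγ γ l)
        (nhdsWithin 0 (Set.Ioi 0))
        (nhds (∫ l in am..ap, g l * f l)) := by
  intro g
  obtain rfl : bm = wachterLowerEdge := funext hbm
  obtain rfl : bp = wachterUpperEdge := funext hbp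
  obtain rfl : fγ = wachterDensity := funext fun γ => funext (hfγ γ)
  rw [← wachterLowerEdge_zero] at ham
  rw [← wachterUpperEdge_zero] at hap
  subst ham hap
  obtain rfl : f = wachterDensity 0 := funext fun t => by simp [hf, wachterDensity]
  have h2 : √2 ^ 2 = 2 := sq_sqrt zero_le_two
  have hs : √2 < 3 / 2 := by nlinarith [sqrt_nonneg 2]
  -- `[1/10, 6]` contains `[3 - 2√2, 3 + 2√2]` in its interior and avoids the pole of `f_γ` at `0`.
  have hlow : wachterLowerEdge 0 ∈ Ioo (1 / 10 : ℝ) 6 := by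
    rw [wachterLowerEdge_zero]
    constructor <;> nlinarith
  have hupp : wachterUpperEdge 0 ∈ Ioo (1 / 10 : ℝ) 6 := by
    rw [wachterUpperEdge_zero]
    constructor <;> nlinarith
  refine ContinuousAt.tendsto ?_ |>.mono_left nhdsWithin_le_nhds
  refine intervalIntegral.continuousAt_parametric_intervalIntegral_of_continuousAt
    (c := 1 / 10) (d := 6) (F := fun γ t => g t * wachterDensity γ t)
    (fun γ => (g.continuous.measurable.mul (measurable_wachterDensity γ)).aestronglyMeasurable)
    (fun t ht => ?_) continuous_wachterLowerEdge.continuousAt continuousAt_wachterUpperEdge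
    hlow hupp
  exact (g.continuous.continuousAt.comp continuousAt_snd).mul
    (continuousAt_wachterDensity (by linarith [ht.1]))
end
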